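/- Let k ≥ 2, let M be a matroid on the finite ground set V with rank r, and let f : (k+1)^V → ℝ be pairwise monotone. Suppose x* ∈ (k+1)^V is feasible (supp(x*) is independent in M), f(x*) ≥ f(y) for every feasible y, and x* is maximal with respect to ⪯ among feasible maximizers (there is no feasible y with x* ⪯ y, x* ≠ y, and f(y) = f(x*)). Then supp(x*) is a basis of M; in particular |supp(x*)| = r. -/

import Mathlib

namespace Stmt14

variable {V : Type*}

/-- A matroid on `V`, given by its collection of independent (finite) subsets. -/
structure FinMatroid (V : Type*) [DecidableEq V] where
  Indep : Finset V → Prop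
  indep_empty : Indep ∅
  indep_subset : ∀ ⦃A B : Finset V⦄, A ⊆ B → Indep B → Indep A
  indep_exchange : ∀ ⦃A B : Finset V⦄, Indep A → Indep B → A.card < B.card →
    ∃ x ∈ B \ A, Indep (insert x A)

/-- A basis is a maximal independent set. -/
def FinMatroid.IsBasis [DecidableEq V] (M : FinMatroid V) (B : Finset V) : Prop :=
  M.Indep B ∧ ∀ ⦃A : Finset V⦄, M.Indep A → B ⊆ A → A = B

/-- Marginal gain `Δ_{e,i} f(x) = f(x[e↦i]) − f(x)`. -/
def marg {k : ℕ} [DecidableEq V] (f : (V → Fin (k+1)) → ℝ)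
    (x : V → Fin (k+1)) (e : V) (i : Fin (k+1)) : ℝ :=
  f (Function.update x e i) - f x

/-- `x ⪯ y` : `y` agrees with `x` on the support of `x`. -/
def preceq {k : ℕ} (x y : V → Fin (k+1)) : Prop :=
  ∀ e, x e ≠ 0 → y e = x e

def PairwiseMonotone {k : ℕ} [DecidableEq V] (f : (V → Fin (k+1)) → ℝ) : Prop :=
  ∀ x : V → Fin (k+1), ∀ e, x e = 0 → ∀ i j : Fin (k+1), i ≠ 0 → j ≠ 0 → i ≠ j →
    marg f x e i + marg f x e j ≥ 0

/-- The support of `x` as a finset. -/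
def suppF {k : ℕ} [Fintype V] [DecidableEq V] (x : V → Fin (k+1)) : Finset V :=
  Finset.univ.filter (fun v => x v ≠ 0)

section

variable {k : ℕ} [DecidableEq V]

@[simp]
theorem mem_suppF [Fintype V] {x : V → Fin (k+1)} {e : V} : e ∈ suppF x ↔ x e ≠ 0 := by
  simp [suppF]

theorem suppF_update_of_ne_zero [Fintype V] (x : V → Fin (k+1)) (e : V) {m : Fin (k+1)}
    (hm : m ≠ 0) : suppF (Function.update x e m) = insert e (suppF x) := by
  ext v
  by_cases hv : v = e
  · subst hv; simp [hm]
  · simp [hv]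

theorem preceq_update_of_eq_zero {x : V → Fin (k+1)} {e : V} (hxe : x e = 0) (m : Fin (k+1)) :
    preceq x (Function.update x e m) := fun v hv =>
  Function.update_of_ne (by rintro rfl; exact hv hxe) _ _

theorem PairwiseMonotone.exists_marg_nonneg {f : (V → Fin (k+1)) → ℝ} (hpm : PairwiseMonotone f)
    (hk : 2 ≤ k) {x : V → Fin (k+1)} {e : V} (hxe : x e = 0) :
    ∃ m : Fin (k+1), m ≠ 0 ∧ 0 ≤ marg f x e m := by
  have h1 : (⟨1, by omega⟩ : Fin (k+1)) ≠ 0 := by simp [Fin.ext_iff]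
  have h2 : (⟨2, by omega⟩ : Fin (k+1)) ≠ 0 := by simp [Fin.ext_iff]
  have hsum := hpm x e hxe _ _ h1 h2 (by simp [Fin.ext_iff])
  by_cases hmarg : 0 ≤ marg f x e ⟨1, by omega⟩
  · exact ⟨_, h1, hmarg⟩
  · exact ⟨_, h2, by linarith⟩

theorem FinMatroid.isBasis_of_forall_not_indep_insert (M : FinMatroid V) {B : Finset V}
    (hB : M.Indep B) (hmax : ∀ e ∉ B, ¬ M.Indep (insert e B)) : M.IsBasis B := by
  refine ⟨hB, fun A hA hBA => ?_⟩
  by_contra hne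
  obtain ⟨e, heA, heB⟩ := Finset.exists_of_ssubset (hBA.ssubset_of_ne (Ne.symm hne))
  exact hmax e heB (M.indep_subset (Finset.insert_subset heA hBA) hA)

/-- Extending a feasible maximizer by one more element, with a label of nonnegative marginal
gain, gives another feasible maximizer above it. -/
theorem not_indep_insert_suppF_of_maximal [Fintype V] (hk : 2 ≤ k) (M : FinMatroid V)
    {f : (V → Fin (k+1)) → ℝ} (hpm : PairwiseMonotone f) {x : V → Fin (k+1)}
    (hopt : ∀ y : V → Fin (k+1), M.Indep (suppF y) → f y ≤ f x)
    (hmax : ¬ ∃ y : V → Fin (k+1), M.Indep (suppF y) ∧ preceq x y ∧ x ≠ y ∧ f y = f x)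
    {e : V} (he : e ∉ suppF x) : ¬ M.Indep (insert e (suppF x)) := by
  intro hind
  have hxe : x e = 0 := by simpa using he
  obtain ⟨m, hm, hgain⟩ := hpm.exists_marg_nonneg hk hxe
  have hfeas : M.Indep (suppF (Function.update x e m)) := by
    rwa [suppF_update_of_ne_zero x e hm]
  have hne : x ≠ Function.update x e m := fun h =>
    hm (by simpa [← hxe] using (congrFun h e).symm)
  have hval : f (Function.update x e m) = f x :=
    le_antisymm (hopt _ hfeas) (by unfold marg at hgain; linarith)
  exact hmax ⟨_, hfeas, preceq_update_of_eq_zero hxe m, hne, hval⟩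

end

/-- For `k ≥ 2`, any maximal optimal solution for maximizing a pairwise-monotone
(`k`-submodular, possibly non-monotone) function under a matroid constraint has
support a basis; in particular its support has size `r`, the rank. -/
theorem stmt14 {k : ℕ} (hk : 2 ≤ k) [Fintype V] [DecidableEq V]
    (M : FinMatroid V) (r : ℕ)
    (hrank : ∀ B : Finset V, M.IsBasis B → B.card = r)
    (f : (V → Fin (k+1)) → ℝ) (hpm : PairwiseMonotone f)
    (x : V → Fin (k+1)) (hfeas : M.Indep (suppF x))
    (hopt : ∀ y : V → Fin (k+1), M.Indep (suppF y) → f y ≤ f x)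
    (hmax : ¬ ∃ y : V → Fin (k+1),
      M.Indep (suppF y) ∧ preceq x y ∧ x ≠ y ∧ f y = f x) :
    M.IsBasis (suppF x) ∧ (suppF x).card = r := by
  have hbasis : M.IsBasis (suppF x) :=
    M.isBasis_of_forall_not_indep_insert hfeas fun _ he =>
      not_indep_insert_suppF_of_maximal hk M hpm hopt hmax he
  exact ⟨hbasis, hrank _ hbasis⟩

end Stmt14
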